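/- arXiv:2008.05008 — 2 statements merged into one kernel-verified Lean document; each statement's English description precedes it below -/
import Mathlib

section
/- The restriction of the transition operator Z to the range of Z*Z is an isometric isomorphism onto ℂ^{n_{k'}}, i.e., for all u in ran(Z*Z), ‖Zu‖ = ‖u‖, and Z maps ran(Z*Z) bijectively onto ℂ^{n_{k'}}. -/
/-!
The rows of `Z` are `n'` distinct characters of `ℤ/nℤ` scaled to unit norm, so `Z Zᴴ = 1` by
orthogonality of characters: `Z` is a co-isometry. For a co-isometry `A` the range of `A* A` is
the range of `A*`, on which `A` is inverse to the isometry `A*`.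
-/

open Complex Matrix Finset

namespace LinearMap

variable {𝕜 E F : Type*} [RCLike 𝕜] [NormedAddCommGroup E] [InnerProductSpace 𝕜 E]
  [FiniteDimensional 𝕜 E] [NormedAddCommGroup F] [InnerProductSpace 𝕜 F] [FiniteDimensional 𝕜 F]
  {A : E →ₗ[𝕜] F}

lemma norm_adjoint_apply_of_comp_adjoint_eq_id (hA : A ∘ₗ A.adjoint = id) (y : F) :
    ‖A.adjoint y‖ = ‖y‖ := by
  have h : inner 𝕜 (A.adjoint y) (A.adjoint y) = inner 𝕜 y y := by
    rw [adjoint_inner_left, ← comp_apply, hA, id_apply]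
  rw [norm_eq_sqrt_re_inner (𝕜 := 𝕜), h, ← norm_eq_sqrt_re_inner]

lemma adjoint_apply_apply_of_mem_range (hA : A ∘ₗ A.adjoint = id) {x : E}
    (hx : x ∈ range (A.adjoint ∘ₗ A)) : A.adjoint (A x) = x := by
  rw [range_adjoint_comp_self] at hx
  obtain ⟨y, rfl⟩ := hx
  rw [← comp_apply A, hA, id_apply]

lemma norm_apply_of_mem_range_adjoint_comp_self (hA : A ∘ₗ A.adjoint = id) {x : E}
    (hx : x ∈ range (A.adjoint ∘ₗ A)) : ‖A x‖ = ‖x‖ := by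
  rw [← norm_adjoint_apply_of_comp_adjoint_eq_id hA, adjoint_apply_apply_of_mem_range hA hx]

lemma bijOn_range_adjoint_comp_self (hA : A ∘ₗ A.adjoint = id) :
    Set.BijOn A (range (A.adjoint ∘ₗ A)) Set.univ := by
  refine Set.InvOn.bijOn (f' := A.adjoint)
    ⟨fun x hx ↦ adjoint_apply_apply_of_mem_range hA hx, fun y _ ↦ congr($hA y)⟩
    (Set.mapsTo_univ _ _) fun y _ ↦ ?_
  rw [SetLike.mem_coe, range_adjoint_comp_self]
  exact mem_range_self _ y

end LinearMap

lemma Matrix.toEuclideanLin_comp_adjoint_eq_id {𝕜 m n : Type*} [RCLike 𝕜] [Fintype m]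
    [DecidableEq m] [Fintype n] [DecidableEq n] {A : Matrix m n 𝕜} (hA : A * Aᴴ = 1) :
    toEuclideanLin A ∘ₗ (toEuclideanLin A).adjoint = LinearMap.id := by
  rw [← toEuclideanLin_conjTranspose_eq_adjoint, ← toLpLin_mul_same, hA, toLpLin_one]

lemma Fin.sum_natCast_zmod {M : Type*} [AddCommMonoid M] (n : ℕ) [NeZero n] (f : ZMod n → M) :
    ∑ a : Fin n, f (a.val : ZMod n) = ∑ x : ZMod n, f x := by
  refine Fintype.sum_bijective _ ?_ _ _ fun _ ↦ rfl
  refine (Fintype.bijective_iff_injective_and_card _).2 ⟨fun a b h ↦ Fin.ext ?_, by simp⟩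
  simpa [ZMod.val_natCast_of_lt a.2, ZMod.val_natCast_of_lt b.2] using congrArg ZMod.val h

lemma ZMod.stdAddChar_natCast_mul (n : ℕ) [NeZero n] (b a : ℕ) :
    ZMod.stdAddChar ((b : ZMod n) * (a : ZMod n)) = exp (2 * Real.pi * I * b * a / n) := by
  simpa [mul_assoc] using ZMod.stdAddChar_coe (N := n) (b * a)

theorem dft_rows_mul_conjTranspose_eq_one {n n' : ℕ} (hn : 0 < n) (hle : n' ≤ n)
    {Z : Matrix (Fin n') (Fin n) ℂ}
    (hZ : ∀ (b : Fin n') (a : Fin n), Z b a =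
      Complex.exp (2 * Real.pi * Complex.I * (b.val : ℂ) * (a.val : ℂ) / (n : ℂ)) /
        (Real.sqrt n : ℂ)) :
    Z * Zᴴ = 1 := by
  have : NeZero n := ⟨hn.ne'⟩
  set ψ : AddChar (ZMod n) ℂ := ZMod.stdAddChar
  have hentry (b b' : Fin n') (a : Fin n) :
      Z b a * star (Z b' a) = ψ (a.val * ((b.val : ZMod n) - b'.val)) / n := by
    rw [hZ, hZ, ← ZMod.stdAddChar_natCast_mul, ← ZMod.stdAddChar_natCast_mul, star_div₀,
      Complex.star_def, ← AddChar.map_neg_eq_conj, div_mul_div_comm, ← AddChar.map_add_eq_mul,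
      Complex.conj_ofReal, ← Complex.ofReal_mul, Real.mul_self_sqrt n.cast_nonneg]
    congr 2
    ring
  have hcast : Function.Injective fun b : Fin n' ↦ (b.val : ZMod n) := fun b b' h ↦ Fin.ext <| by
    simpa [ZMod.val_natCast_of_lt (b.2.trans_le hle), ZMod.val_natCast_of_lt (b'.2.trans_le hle)]
      using congrArg ZMod.val h
  ext b b'
  simp only [mul_apply, conjTranspose_apply, hentry, ← Finset.sum_div]
  rw [Fin.sum_natCast_zmod n (fun x ↦ ψ (x * _)),
    AddChar.sum_mulShift _ (ZMod.isPrimitive_stdAddChar n)]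
  simp only [sub_eq_zero, hcast.eq_iff, ZMod.card, one_apply]
  split_ifs <;> simp [hn.ne']

theorem transition_isometric_iso_on_range_general (n n' : ℕ) (hn : 0 < n) (hle : n' ≤ n)
    (Z : Matrix (Fin n') (Fin n) ℂ)
    (hZ : ∀ (b : Fin n') (a : Fin n), Z b a =
      Complex.exp (2 * Real.pi * Complex.I * (b.val : ℂ) * (a.val : ℂ) / (n : ℂ)) /
        (Real.sqrt n : ℂ)) :
    (∀ u ∈ LinearMap.range (Matrix.toEuclideanLin (Zᴴ * Z)),
        ‖Matrix.toEuclideanLin Z u‖ = ‖u‖) ∧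
    Set.BijOn (Matrix.toEuclideanLin Z)
      (LinearMap.range (Matrix.toEuclideanLin (Zᴴ * Z)) : Set (EuclideanSpace ℂ (Fin n)))
      (Set.univ : Set (EuclideanSpace ℂ (Fin n'))) := by
  have hA := toEuclideanLin_comp_adjoint_eq_id (dft_rows_mul_conjTranspose_eq_one hn hle hZ)
  rw [toLpLin_mul_same, toEuclideanLin_conjTranspose_eq_adjoint]
  exact ⟨fun u hu ↦ LinearMap.norm_apply_of_mem_range_adjoint_comp_self hA hu,
    LinearMap.bijOn_range_adjoint_comp_self hA⟩

theorem transition_isometric_iso_on_range (n n' : ℕ) (hn : 0 < n) (hn' : 0 < n') (hle : n' ≤ n)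
    (Z : Matrix (Fin n') (Fin n) ℂ)
    (hZ : ∀ (b : Fin n') (a : Fin n), Z b a =
      Complex.exp (2 * Real.pi * Complex.I * (b.val : ℂ) * (a.val : ℂ) / (n : ℂ)) /
        (Real.sqrt n : ℂ)) :
    (∀ u ∈ LinearMap.range (Matrix.toEuclideanLin (Zᴴ * Z)),
        ‖Matrix.toEuclideanLin Z u‖ = ‖u‖) ∧
    Set.BijOn (Matrix.toEuclideanLin Z)
      (LinearMap.range (Matrix.toEuclideanLin (Zᴴ * Z)) : Set (EuclideanSpace ℂ (Fin n)))
      (Set.univ : Set (EuclideanSpace ℂ (Fin n'))) :=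
  transition_isometric_iso_on_range_general n n' hn hle Z hZ
end

section
/- Let Z be the transport operator on H = ⊕_{k=1}^N ℂ^{n_k} (with n_{k+1} ≤ n_k) and φ_{0_k} the zeroth entangled vector of level k. For the zeroth canonical basis vector |0_k⟩ of level k and for 1 ≤ m ≤ (N-k)/2, one has Z^{2m}|0_k⟩ = ∏_{j=0}^{m-1} √(n_{k+2j+1}/n_{k+2j}) · |0_{k+2m}⟩ and Z^{2m-1}|0_k⟩ = ∏_{j=0}^{m-1} √(n_{k+2j+1}/n_{k+2j}) · φ_{0_{k+2m-1}}. -/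
open Complex Matrix Finset
open scoped Real

/-!
Column `0` of each transition matrix is constant, so `Z |0_l⟩ = √(n_{l+1}/n_l) φ_{0_{l+1}}`.
Conversely `Z φ_{0_l} = |0_{l+1}⟩`: entry `b` of `Z φ_{0_l}` is the character sum
`∑_a e^{2πi ba/n_l} / n_l`, which vanishes unless `b = 0` because `b < n_{l+1} ≤ n_l`.
Alternating the two steps, starting from `|0_k⟩`, gives both formulas by induction on `m`.
-/

theorem sum_exp_two_pi_I_mul_div {n b : ℕ} (hn : 0 < n) (hb : b < n) :
    ∑ a : Fin n, exp (2 * π * I * b * a / n) = if b = 0 then (n : ℂ) else 0 := by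
  have hζ := isPrimitiveRoot_exp n hn.ne'
  have hterm (a : ℕ) : exp (2 * π * I * b * a / n) = (exp (2 * π * I / n) ^ b) ^ a := by
    rw [← pow_mul, ← exp_nat_mul]; push_cast; ring_nf
  simp only [hterm, Fin.sum_univ_eq_sum_range (fun a => (exp (2 * π * I / n) ^ b) ^ a)]
  split_ifs with hb0
  · simp [hb0]
  · rw [geom_sum_eq (hζ.pow_ne_one_of_pos_of_lt hb0 hb), pow_right_comm,
      hζ.pow_eq_one, one_pow, sub_self, zero_div]

theorem Real.sqrt_div_mul_one_div_sqrt {a b : ℝ} (ha : 0 < a) (hb : 0 ≤ b) :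
    √(a / b) * (1 / √a) = 1 / √b := by
  rw [Real.sqrt_div' _ hb]
  field_simp [(Real.sqrt_pos.mpr ha).ne']

section Transport

variable {N : ℕ} {n : ℕ → ℕ}

def IsTransportMatrix (n : ℕ → ℕ)
    (Z : Matrix (Σ k : Fin N, Fin (n k.val)) (Σ k : Fin N, Fin (n k.val)) ℂ) : Prop :=
  ∀ (k' k : Fin N) (b : Fin (n k'.val)) (a : Fin (n k.val)),
    Z ⟨k', b⟩ ⟨k, a⟩ =
      if k'.val = k.val + 1 then
        Complex.exp (2 * Real.pi * Complex.I * (b.val : ℂ) * (a.val : ℂ) / (n k.val : ℂ)) /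
          (Real.sqrt (n k.val) : ℂ)
      else 0

def basisZero (hpos : ∀ k, 0 < n k) (l : Fin N) : (Σ k : Fin N, Fin (n k.val)) → ℂ :=
  Pi.single ⟨l, ⟨0, hpos l⟩⟩ 1

/-- `φ_{0_l}`. The level is a natural number, so for `l ≥ N` this is the zero vector. -/
noncomputable def entangledZero (n : ℕ → ℕ) (l : ℕ) : (Σ k : Fin N, Fin (n k.val)) → ℂ :=
  fun i => if i.1.val = l then 1 / (√(n l) : ℂ) else 0

theorem basisZero_apply (hpos : ∀ k, 0 < n k) (l l' : Fin N) (b : Fin (n l')) :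
    basisZero hpos l ⟨l', b⟩ = if l' = l ∧ b.val = 0 then 1 else 0 := by
  rw [basisZero, Pi.single_apply]
  by_cases hl : l' = l
  · subst hl
    simp [Fin.ext_iff]
  · simp [hl]

namespace IsTransportMatrix

variable {Z : Matrix (Σ k : Fin N, Fin (n k.val)) (Σ k : Fin N, Fin (n k.val)) ℂ}

theorem mulVec_basisZero (hZ : IsTransportMatrix n Z) (hpos : ∀ k, 0 < n k) (l : Fin N) :
    Z *ᵥ basisZero hpos l = ((√(n (l + 1) / n l) : ℝ) : ℂ) • entangledZero n (l + 1) := by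
  ext ⟨l', b⟩
  simp only [basisZero, mulVec_single_one, col_apply, Pi.smul_apply, entangledZero, smul_eq_mul]
  rw [hZ]
  split_ifs
  · simp only [Nat.cast_zero, mul_zero, zero_div, exp_zero]
    exact_mod_cast (Real.sqrt_div_mul_one_div_sqrt (by exact_mod_cast hpos _)
      (Nat.cast_nonneg _)).symm
  · simp

theorem mulVec_entangledZero (hZ : IsTransportMatrix n Z) (hpos : ∀ k, 0 < n k) (l : ℕ)
    (hl : l + 1 < N) (hle : n (l + 1) ≤ n l) :
    Z *ᵥ entangledZero n l = basisZero hpos ⟨l + 1, hl⟩ := by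
  ext ⟨l', b⟩
  rw [mulVec, dotProduct, Fintype.sum_sigma, basisZero_apply, Finset.sum_eq_single ⟨l, by omega⟩]
  · by_cases hl' : l'.val = l + 1
    · obtain rfl : l' = ⟨l + 1, hl⟩ := Fin.ext hl'
      simp only [hZ _ _ _ _, entangledZero, if_true, true_and]
      rw [← Finset.sum_mul, ← Finset.sum_div, sum_exp_two_pi_I_mul_div (hpos l) (b.2.trans_le hle)]
      split_ifs
      · rw [div_mul_div_comm, mul_one, ← ofReal_mul, Real.mul_self_sqrt (Nat.cast_nonneg _),
          ofReal_natCast, div_self (by exact_mod_cast (hpos l).ne')]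
      · simp
    · simp [hZ _ _ _ _, hl', Fin.ext_iff]
  · intro l'' _ hl''
    have hl'' : l''.val ≠ l := fun h => hl'' (Fin.ext h)
    simp [entangledZero, hl'']
  · simp

theorem pow_even_mulVec_basisZero (hZ : IsTransportMatrix n Z) (hpos : ∀ k, 0 < n k)
    (hmono : ∀ k, k + 1 < N → n (k + 1) ≤ n k) (k m : ℕ) (hkm : k + 2 * m < N) :
    Z ^ (2 * m) *ᵥ basisZero hpos ⟨k, by omega⟩ =
      ((∏ j ∈ range m, √((n (k + 2 * j + 1) : ℝ) / n (k + 2 * j)) : ℝ) : ℂ) •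
        basisZero hpos ⟨k + 2 * m, hkm⟩ := by
  induction m with
  | zero => simp
  | succ m ih =>
    rw [show Z ^ (2 * (m + 1)) = Z * (Z * Z ^ (2 * m)) by rw [mul_add_one, pow_succ', pow_succ'],
      ← mulVec_mulVec, ← mulVec_mulVec, ih (by omega),
      mulVec_smul, hZ.mulVec_basisZero, mulVec_smul, mulVec_smul,
      hZ.mulVec_entangledZero hpos _ (by omega) (hmono _ (by omega)), smul_smul,
      prod_range_succ, ofReal_mul]
    rfl

theorem pow_odd_mulVec_basisZero (hZ : IsTransportMatrix n Z) (hpos : ∀ k, 0 < n k)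
    (hmono : ∀ k, k + 1 < N → n (k + 1) ≤ n k) (k m : ℕ) (hkm : k + 2 * m < N) :
    Z ^ (2 * m + 1) *ᵥ basisZero hpos ⟨k, by omega⟩ =
      ((∏ j ∈ range (m + 1), √((n (k + 2 * j + 1) : ℝ) / n (k + 2 * j)) : ℝ) : ℂ) •
        entangledZero n (k + 2 * m + 1) := by
  rw [pow_succ', ← mulVec_mulVec, hZ.pow_even_mulVec_basisZero hpos hmono k m hkm, mulVec_smul,
    hZ.mulVec_basisZero, smul_smul, prod_range_succ, ofReal_mul]

end IsTransportMatrix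

end Transport

theorem transport_powers_on_zero (N : ℕ) (n : ℕ → ℕ) (hpos : ∀ k, 0 < n k)
    (hmono : ∀ k, k + 1 < N → n (k + 1) ≤ n k)
    (Z : Matrix (Σ k : Fin N, Fin (n k.val)) (Σ k : Fin N, Fin (n k.val)) ℂ)
    (hZ : ∀ (k' k : Fin N) (b : Fin (n k'.val)) (a : Fin (n k.val)),
      Z ⟨k', b⟩ ⟨k, a⟩ =
        if k'.val = k.val + 1 then
          Complex.exp (2 * Real.pi * Complex.I * (b.val : ℂ) * (a.val : ℂ) / (n k.val : ℂ)) /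
            (Real.sqrt (n k.val) : ℂ)
        else 0)
    (k m : ℕ) (hm : 1 ≤ m) (hkm : k + 2 * m < N) :
    (Z ^ (2 * m)).mulVec
        (Pi.single (⟨⟨k, by omega⟩, ⟨0, hpos k⟩⟩ : Σ k : Fin N, Fin (n k.val)) 1) =
      ((∏ j ∈ Finset.range m,
          Real.sqrt ((n (k + 2 * j + 1) : ℝ) / (n (k + 2 * j) : ℝ)) : ℝ) : ℂ) •
        (Pi.single (⟨⟨k + 2 * m, hkm⟩, ⟨0, hpos (k + 2 * m)⟩⟩ : Σ k : Fin N, Fin (n k.val)) 1 :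
          (Σ k : Fin N, Fin (n k.val)) → ℂ) ∧
    (Z ^ (2 * m - 1)).mulVec
        (Pi.single (⟨⟨k, by omega⟩, ⟨0, hpos k⟩⟩ : Σ k : Fin N, Fin (n k.val)) 1) =
      ((∏ j ∈ Finset.range m,
          Real.sqrt ((n (k + 2 * j + 1) : ℝ) / (n (k + 2 * j) : ℝ)) : ℝ) : ℂ) •
        (fun i : Σ k : Fin N, Fin (n k.val) =>
          if i.1.val = k + 2 * m - 1 then 1 / (Real.sqrt (n (k + 2 * m - 1)) : ℂ) else 0) := by
  have hZ : IsTransportMatrix n Z := hZ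
  refine ⟨hZ.pow_even_mulVec_basisZero hpos hmono k m hkm, ?_⟩
  obtain ⟨m, rfl⟩ := Nat.exists_eq_add_of_le' hm
  rw [show 2 * (m + 1) - 1 = 2 * m + 1 by omega, show k + 2 * (m + 1) - 1 = k + 2 * m + 1 by omega]
  exact hZ.pow_odd_mulVec_basisZero hpos hmono k m (by omega)
end
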